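/- Let n ≥ 2, let d_1, …, d_n be unit vectors in ℂ^m, let p = (p_1,…,p_n) be a probability vector, and let u_1, …, u_n be unit vectors in ℂ^n. For the pure bipartite input state ψ_AB = Σ_i √p_i · e_i ⊗ u_i, with reduced state ρ_A given by (ρ_A)_{ik} = √(p_i p_k) ⟨u_k, u_i⟩, normalized concurrence squared E(ψ)² = (2(n−1)/n²)(1 − Tr(ρ_A²)), and post-interaction bipartite state ρ̃_AB = Σ_{i,j} √(p_i p_j) ⟨d_j, d_i⟩ (e_i e_j^*) ⊗ (u_i u_j^*), one has (P_s(p) − 1/n)² + V(ρ̃_A)² + E(ψ)² ≤ (n²−1)/n² − (2(n−1)/n²)·Tr(ρ̃_AB²). -/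

import Mathlib

/-!
Tracing out the memory, `V² + E²` is controlled by the purity of `ρ_A`: its off-diagonal
entries enter `V` damped by `|⟨d_k, d_i⟩| ≤ 1`, so `V² + E² ≤ (2(n−1)/n²)(1 − ∑ p_i²)`.
For the distinguishability, `n ∑ p_i ⟨d_i, Π_i d_i⟩ − 1` is half the sum over pairs `(i, k)` of
`p_i ⟨d_i, B d_i⟩ − p_k ⟨d_k, B d_k⟩` with `B = Π_i − Π_k` and `−1 ≤ B ≤ 1`; Helstrom's bound
estimates each term by `√((p_i + p_k)² − 4 p_i p_k |⟨d_i, d_k⟩|²)`, and a weighted Cauchy–Schwarz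
inequality over the pairs `i ≠ k` turns the sum of these square roots into
`Tr(ρ̃_AB²) = ∑ p_i p_k |⟨d_i, d_k⟩|²`.
-/

open Matrix ComplexOrder

noncomputable section

/-- Inner product ⟨a, b⟩ = ∑ i, conj (a i) * b i on a finite-dimensional complex space. -/
def ip {k : Type*} [Fintype k] (a b : k → ℂ) : ℂ := ∑ i, star (a i) * b i

/-- The optimal success probability of minimum-error discrimination of the detector
states `d i` with prior probabilities `q i`: the supremum over all POVMs
`Pov` (positive semidefinite matrices summing to the identity) of
`∑ i, q i * ⟨d i, Pov i (d i)⟩`. -/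
def Ps {m n : ℕ} (d : Fin n → Fin m → ℂ) (q : Fin n → ℝ) : ℝ :=
  sSup { x : ℝ | ∃ Pov : Fin n → Matrix (Fin m) (Fin m) ℂ,
    (∀ i, (Pov i).PosSemidef) ∧ (∑ i, Pov i) = 1 ∧
    x = ∑ i, q i * (ip (d i) ((Pov i) *ᵥ (d i))).re }

/-- The visibility `V(ρ̃_A) = √( (2(n−1)/n²) ∑_{i≠k} |⟨d_k, d_i⟩|² |(ρ_A)_{ik}|² )`. -/
def Vis {m n : ℕ} (d : Fin n → Fin m → ℂ) (ρ : Matrix (Fin n) (Fin n) ℂ) : ℝ :=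
  Real.sqrt ((2 * ((n : ℝ) - 1) / (n : ℝ) ^ 2) *
    ∑ i, ∑ k, if i = k then 0 else ‖ip (d k) (d i)‖ ^ 2 * ‖ρ i k‖ ^ 2)

/-- The post-interaction detector state `ρ̃_D = ∑ i, q i • d i (d i)^*`. -/
def detState {m n : ℕ} (d : Fin n → Fin m → ℂ) (q : Fin n → ℝ) :
    Matrix (Fin m) (Fin m) ℂ :=
  ∑ i, (q i : ℂ) • vecMulVec (d i) (star (d i))

/-- The post-interaction particle state `(ρ̃_A)_{ik} = ⟨d_k, d_i⟩ (ρ_A)_{ik}`. -/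
def post {m n : ℕ} (d : Fin n → Fin m → ℂ) (ρ : Matrix (Fin n) (Fin n) ℂ) :
    Matrix (Fin n) (Fin n) ℂ :=
  Matrix.of fun i k => ip (d k) (d i) * ρ i k

/-- The purity `Tr(ρ²)` (as a real number). -/
def purity {k : Type*} [Fintype k] (ρ : Matrix k k ℂ) : ℝ := ((ρ * ρ).trace).re

section InnerProduct

variable {κ : Type*} [Fintype κ]

theorem ip_eq_star_dotProduct (a b : κ → ℂ) : ip a b = star a ⬝ᵥ b := rfl

theorem star_ip (a b : κ → ℂ) : star (ip a b) = ip b a := by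
  simp [ip, star_sum, mul_comm]

theorem norm_ip_comm (a b : κ → ℂ) : ‖ip a b‖ = ‖ip b a‖ := by
  rw [← star_ip a b, norm_star]

theorem ip_add_right (a b c : κ → ℂ) : ip a (b + c) = ip a b + ip a c :=
  dotProduct_add _ _ _

theorem ip_sub_right (a b c : κ → ℂ) : ip a (b - c) = ip a b - ip a c :=
  dotProduct_sub _ _ _

theorem ip_sum_right {ι : Type*} (s : Finset ι) (a : κ → ℂ) (v : ι → κ → ℂ) :
    ip a (∑ j ∈ s, v j) = ∑ j ∈ s, ip a (v j) :=
  dotProduct_sum _ _ _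

theorem sum_norm_sq_eq_one {x : κ → ℂ} (hx : ip x x = 1) : ∑ i, ‖x i‖ ^ 2 = 1 := by
  have h : ((∑ i, ‖x i‖ ^ 2 : ℝ) : ℂ) = ip x x := by
    push_cast
    exact Finset.sum_congr rfl fun i _ => (Complex.conj_mul' (x i)).symm
  exact_mod_cast h.trans hx

theorem Matrix.PosSemidef.norm_ip_mulVec_sq_le {M : Matrix κ κ ℂ} (hM : M.PosSemidef)
    (x y : κ → ℂ) : ‖ip x (M *ᵥ y)‖ ^ 2 ≤ (ip x (M *ᵥ x)).re * (ip y (M *ᵥ y)).re := by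
  let _ := M.toSeminormedAddCommGroup hM
  let _ := M.toInnerProductSpace hM
  have hinner : ∀ a b : κ → ℂ, (inner ℂ a b : ℂ) = ip a (M *ᵥ b) := fun a b => by
    show (M *ᵥ b) ⬝ᵥ star a = _
    simp only [ip, dotProduct, Pi.star_apply, mul_comm]
  have h := inner_mul_inner_self_le (𝕜 := ℂ) x y
  rwa [norm_inner_symm y x, ← sq, hinner, hinner, hinner] at h

theorem norm_ip_sq_le_one [DecidableEq κ] {x y : κ → ℂ} (hx : ip x x = 1) (hy : ip y y = 1) :
    ‖ip x y‖ ^ 2 ≤ 1 := by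
  simpa [hx, hy] using PosSemidef.one.norm_ip_mulVec_sq_le x y

end InnerProduct

theorem sq_mul_sub_mul_le {p q β γ u v t : ℝ} (hp : 0 ≤ p) (hq : 0 ≤ q)
    (hβ : β ^ 2 ≤ 1) (hγ : γ ^ 2 ≤ 1)
    (hu2 : u ^ 2 ≤ (1 - β) * (1 - γ)) (hv2 : v ^ 2 ≤ (1 + β) * (1 + γ))
    (ht : 0 ≤ t) (htuv : 2 * t ≤ u + v) :
    (p * β - q * γ) ^ 2 ≤ (p + q) ^ 2 - 4 * p * q * t ^ 2 := by
  have hX : 0 ≤ p ^ 2 * (1 - β ^ 2) := by nlinarith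
  have hY : 0 ≤ q ^ 2 * (1 - γ ^ 2) := by nlinarith
  have huv : (u * v) ^ 2 ≤ (1 - β ^ 2) * (1 - γ ^ 2) := by
    calc (u * v) ^ 2 = u ^ 2 * v ^ 2 := by ring
      _ ≤ ((1 - β) * (1 - γ)) * ((1 + β) * (1 + γ)) :=
        mul_le_mul hu2 hv2 (sq_nonneg v) ((sq_nonneg u).trans hu2)
      _ = (1 - β ^ 2) * (1 - γ ^ 2) := by ring
  have hamgm : 2 * p * q * (u * v) ≤ p ^ 2 * (1 - β ^ 2) + q ^ 2 * (1 - γ ^ 2) := by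
    apply abs_le_of_sq_le_sq' _ (add_nonneg hX hY) |>.2
    nlinarith [sq_nonneg (p ^ 2 * (1 - β ^ 2) - q ^ 2 * (1 - γ ^ 2)),
      mul_le_mul_of_nonneg_left huv (by positivity : (0:ℝ) ≤ 4 * p ^ 2 * q ^ 2)]
  have hpq : 0 ≤ p * q := mul_nonneg hp hq
  nlinarith [mul_le_mul_of_nonneg_left (pow_le_pow_left₀ (by positivity) htuv 2) hpq,
    mul_le_mul_of_nonneg_left hu2 hpq, mul_le_mul_of_nonneg_left hv2 hpq]

theorem helstrom_bound {κ : Type*} [Fintype κ] [DecidableEq κ] {B : Matrix κ κ ℂ}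
    (h1 : (1 - B).PosSemidef) (h2 : (1 + B).PosSemidef)
    {x y : κ → ℂ} (hx : ip x x = 1) (hy : ip y y = 1) {p q : ℝ} (hp : 0 ≤ p) (hq : 0 ≤ q) :
    p * (ip x (B *ᵥ x)).re - q * (ip y (B *ᵥ y)).re ≤
      √((p + q) ^ 2 - 4 * p * q * ‖ip x y‖ ^ 2) := by
  have hsub : ∀ z w, ip z ((1 - B) *ᵥ w) = ip z w - ip z (B *ᵥ w) := fun z w => by
    rw [sub_mulVec, one_mulVec, ip_sub_right]
  have hadd : ∀ z w, ip z ((1 + B) *ᵥ w) = ip z w + ip z (B *ᵥ w) := fun z w => by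
    rw [add_mulVec, one_mulVec, ip_add_right]
  have hsq : ∀ z, ip z z = 1 → (ip z (B *ᵥ z)).re ^ 2 ≤ 1 := fun z hz => by
    have h1z := h1.re_dotProduct_nonneg z
    have h2z := h2.re_dotProduct_nonneg z
    rw [← ip_eq_star_dotProduct, RCLike.re_to_complex] at h1z h2z
    rw [hsub, hz, Complex.sub_re] at h1z
    rw [hadd, hz, Complex.add_re] at h2z
    simp only [Complex.one_re] at h1z h2z
    nlinarith
  -- Cauchy–Schwarz for the forms of `1 ∓ B`, whose values at `(x, y)` add up to `2 ⟨x, y⟩`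
  have hu2 := h1.norm_ip_mulVec_sq_le x y
  have hv2 := h2.norm_ip_mulVec_sq_le x y
  simp only [hsub, hadd, hx, hy, Complex.sub_re, Complex.add_re, Complex.one_re] at hu2 hv2
  have htuv : 2 * ‖ip x y‖ ≤ ‖ip x y - ip x (B *ᵥ y)‖ + ‖ip x y + ip x (B *ᵥ y)‖ := by
    calc 2 * ‖ip x y‖ = ‖(ip x y - ip x (B *ᵥ y)) + (ip x y + ip x (B *ᵥ y))‖ := by
          rw [sub_add_add_cancel, ← two_mul, norm_mul, Complex.norm_two]
      _ ≤ _ := norm_add_le _ _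
  exact (le_abs_self _).trans <| Real.abs_le_sqrt <| sq_mul_sub_mul_le hp hq (hsq x hx) (hsq y hy)
    hu2 hv2 (norm_nonneg _) htuv

theorem povm_success_bound {ι κ : Type*} [Fintype ι] [Fintype κ] [DecidableEq κ]
    {d : ι → κ → ℂ} (hd : ∀ i, ip (d i) (d i) = 1)
    {p : ι → ℝ} (hp : ∀ i, 0 ≤ p i) (hp1 : ∑ i, p i = 1)
    {P : ι → Matrix κ κ ℂ} (hP : ∀ i, (P i).PosSemidef) (hP1 : ∑ i, P i = 1) :
    Fintype.card ι * ∑ i, p i * (ip (d i) (P i *ᵥ d i)).re ≤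
      1 + (1 / 2) * ∑ i, ∑ k, √((p i + p k) ^ 2 - 4 * p i * p k * ‖ip (d i) (d k)‖ ^ 2) := by
  classical
  have hcompl : ∀ i, (1 - P i).PosSemidef := fun i => by
    rw [← hP1, ← Finset.add_sum_erase _ _ (Finset.mem_univ i), add_sub_cancel_left]
    exact posSemidef_sum _ fun j _ => hP j
  set a : ι → ι → ℝ := fun i k => p i * (ip (d i) (P k *ᵥ d i)).re
  have hrow : ∀ i, ∑ k, a i k = p i := fun i => by
    rw [← Finset.mul_sum, ← Complex.re_sum, ← ip_sum_right, ← sum_mulVec, hP1, one_mulVec, hd i,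
      Complex.one_re, mul_one]
  -- Helstrom's bound for the pair `(i, k)` with the observable `B = P i - P k`
  have hpair : ∀ i k, a i i - a i k - (a k i - a k k) ≤
      √((p i + p k) ^ 2 - 4 * p i * p k * ‖ip (d i) (d k)‖ ^ 2) := fun i k => by
    have h1 : (1 - (P i - P k)).PosSemidef := by
      convert (hcompl i).add (hP k) using 1; abel
    have h2 : (1 + (P i - P k)).PosSemidef := by
      convert (hcompl k).add (hP i) using 1; abel
    have h := helstrom_bound h1 h2 (hd i) (hd k) (hp i) (hp k)
    simp only [sub_mulVec, ip_sub_right, Complex.sub_re] at h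
    simp only [a]
    linarith
  have hsum : ∑ i, ∑ k, (a i i - a i k - (a k i - a k k)) =
      2 * (Fintype.card ι * ∑ i, a i i - 1) := by
    simp only [Finset.sum_sub_distrib, Finset.sum_const, Finset.card_univ, nsmul_eq_mul]
    rw [Finset.sum_comm (f := fun i k => a k i)]
    simp only [hrow, hp1, ← Finset.mul_sum]
    ring
  have := Finset.sum_le_sum fun i (_ : i ∈ Finset.univ) =>
    Finset.sum_le_sum fun k (_ : k ∈ Finset.univ) => hpair i k
  rw [hsum] at this
  linarith

theorem sum_sum_ite_eq_sub_sum_diag {ι : Type*} [Fintype ι] [DecidableEq ι] (f : ι → ι → ℝ) :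
    ∑ i, ∑ k, (if i = k then 0 else f i k) = ∑ i, ∑ k, f i k - ∑ i, f i i := by
  rw [← Finset.sum_sub_distrib]
  refine Finset.sum_congr rfl fun i _ => ?_
  have hdiag : f i i = ∑ k, if i = k then f i k else 0 := by simp
  rw [eq_sub_iff_add_eq, hdiag, ← Finset.sum_add_distrib]
  exact Finset.sum_congr rfl fun k _ => by split_ifs <;> simp

theorem sq_sum_sqrt_helstrom_le {ι : Type*} [Fintype ι] {p : ι → ℝ} (hp : ∀ i, 0 ≤ p i)
    (hp1 : ∑ i, p i = 1) {T : ι → ι → ℝ} (hT0 : ∀ i k, 0 ≤ T i k) (hT1 : ∀ i k, T i k ≤ 1)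
    (hTd : ∀ i, T i i = 1) :
    (∑ i, ∑ k, √((p i + p k) ^ 2 - 4 * p i * p k * T i k)) ^ 2 ≤
      (2 * Fintype.card ι - 2) *
        (2 * Fintype.card ι - 2 - 4 * (∑ i, ∑ k, p i * p k * T i k - ∑ i, p i ^ 2)) := by
  classical
  set a : ι × ι → ℝ := fun x => if x.1 = x.2 then 0 else p x.1 + p x.2
  set b : ι × ι → ℝ := fun x =>
    if x.1 = x.2 then 0 else p x.1 + p x.2 - 4 * p x.1 * p x.2 * T x.1 x.2
  have hpair : ∀ i k, 4 * p i * p k * T i k ≤ (p i + p k) ^ 2 := fun i k => by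
    nlinarith [sq_nonneg (p i - p k),
      mul_le_mul_of_nonneg_left (hT1 i k) (mul_nonneg (hp i) (hp k))]
  have hle_one : ∀ i k, i ≠ k → p i + p k ≤ 1 := fun i k hik => by
    rw [← hp1, ← Finset.sum_pair hik]
    exact Finset.sum_le_sum_of_subset_of_nonneg (Finset.subset_univ _) fun j _ _ => hp j
  have ha : ∀ x, 0 ≤ a x := fun x => by
    simp only [a]; split_ifs; exacts [le_rfl, add_nonneg (hp _) (hp _)]
  have hb : ∀ x, 0 ≤ b x := fun x => by
    simp only [b]; split_ifs with h
    · exact le_rfl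
    · nlinarith [hpair x.1 x.2, hle_one x.1 x.2 h, add_nonneg (hp x.1) (hp x.2)]
  -- off the diagonal, `p i + p k ≤ 1` gives `s² - 4 p q T ≤ s (s - 4 p q T)` for `s = p i + p k`
  have hterm : ∀ i k, √((p i + p k) ^ 2 - 4 * p i * p k * T i k) ≤ √(a (i, k)) * √(b (i, k)) :=
    fun i k => by
    rw [← Real.sqrt_mul (ha _)]
    apply Real.sqrt_le_sqrt
    simp only [a, b]
    split_ifs with h
    · subst h; rw [hTd]; nlinarith
    · nlinarith [mul_nonneg (mul_nonneg (hp i) (hp k)) (hT0 i k), hle_one i k h]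
  have hcs : ∑ i, ∑ k, √((p i + p k) ^ 2 - 4 * p i * p k * T i k) ≤
      √(∑ x, a x) * √(∑ x, b x) := by
    refine le_trans ?_ (Real.sum_sqrt_mul_sqrt_le Finset.univ ha hb)
    rw [Fintype.sum_prod_type]
    exact Finset.sum_le_sum fun i _ => Finset.sum_le_sum fun k _ => hterm i k
  have hsa : ∑ x, a x = 2 * Fintype.card ι - 2 := by
    rw [Fintype.sum_prod_type, sum_sum_ite_eq_sub_sum_diag (fun i k => p i + p k)]
    simp only [Finset.sum_add_distrib, Finset.sum_const, Finset.card_univ, nsmul_eq_mul,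
      ← Finset.mul_sum, hp1]
    ring
  have hsb : ∑ x, b x =
      2 * Fintype.card ι - 2 - 4 * (∑ i, ∑ k, p i * p k * T i k - ∑ i, p i ^ 2) := by
    rw [Fintype.sum_prod_type,
      sum_sum_ite_eq_sub_sum_diag (fun i k => p i + p k - 4 * p i * p k * T i k)]
    simp only [hTd, Finset.sum_sub_distrib, Finset.sum_add_distrib, Finset.sum_const,
      Finset.card_univ, nsmul_eq_mul, hp1, mul_assoc, ← Finset.mul_sum, mul_one, ← sq]
    ring
  calc _ ≤ (√(∑ x, a x) * √(∑ x, b x)) ^ 2 :=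
        pow_le_pow_left₀ (Finset.sum_nonneg fun i _ => Finset.sum_nonneg fun k _ =>
          Real.sqrt_nonneg _) hcs 2
    _ = _ := by
      rw [mul_pow, Real.sq_sqrt (Finset.sum_nonneg fun x _ => ha x),
        Real.sq_sqrt (Finset.sum_nonneg fun x _ => hb x), hsa, hsb]

section SuccessProbability

variable {m n : ℕ} {d : Fin n → Fin m → ℂ} {p : Fin n → ℝ}

theorem pos_of_sum_eq_one (hp1 : ∑ i, p i = 1) : 0 < n :=
  Nat.pos_of_ne_zero (by rintro rfl; simp at hp1)

theorem Ps_mem_Icc (hd : ∀ i, ip (d i) (d i) = 1) (hp : ∀ i, 0 ≤ p i) (hp1 : ∑ i, p i = 1) :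
    Ps d p ∈ Set.Icc (1 / (n : ℝ)) ((1 + (1 / 2) *
      ∑ i, ∑ k, √((p i + p k) ^ 2 - 4 * p i * p k * ‖ip (d i) (d k)‖ ^ 2)) / n) := by
  have hn : n ≠ 0 := (pos_of_sum_eq_one hp1).ne'
  have hub : ∀ x ∈ {x : ℝ | ∃ P : Fin n → Matrix (Fin m) (Fin m) ℂ, (∀ i, (P i).PosSemidef) ∧
      ∑ i, P i = 1 ∧ x = ∑ i, p i * (ip (d i) (P i *ᵥ d i)).re},
      x ≤ (1 + (1 / 2) *
        ∑ i, ∑ k, √((p i + p k) ^ 2 - 4 * p i * p k * ‖ip (d i) (d k)‖ ^ 2)) / n := by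
    rintro x ⟨P, hP, hP1, rfl⟩
    rw [le_div_iff₀ (by positivity), mul_comm]
    simpa using povm_success_bound hd hp hp1 hP hP1
  -- the trivial measurement `P i = 1 / n` succeeds with probability `1 / n`
  have hmem : ∃ P : Fin n → Matrix (Fin m) (Fin m) ℂ, (∀ i, (P i).PosSemidef) ∧
      ∑ i, P i = 1 ∧ 1 / (n : ℝ) = ∑ i, p i * (ip (d i) (P i *ᵥ d i)).re := by
    refine ⟨fun _ => (n : ℂ)⁻¹ • 1, fun _ => PosSemidef.one.smul ?_, ?_, ?_⟩
    · simp [inv_nonneg]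
    · simp [Finset.sum_const, ← Nat.cast_smul_eq_nsmul ℂ, smul_smul, hn]
    · have hval : ∀ i, ip (d i) (((n : ℂ)⁻¹ • 1) *ᵥ d i) = ((n : ℝ)⁻¹ : ℝ) := fun i => by
        rw [smul_mulVec, one_mulVec, ip_eq_star_dotProduct, dotProduct_smul,
          ← ip_eq_star_dotProduct, hd, smul_eq_mul, mul_one]
        push_cast; rfl
      simp only [hval, Complex.ofReal_re, ← Finset.sum_mul, hp1, one_mul, one_div]
  exact ⟨le_csSup ⟨_, hub⟩ hmem, csSup_le ⟨_, hmem⟩ hub⟩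

theorem sq_Ps_sub_le (hd : ∀ i, ip (d i) (d i) = 1) (hp : ∀ i, 0 ≤ p i) (hp1 : ∑ i, p i = 1) :
    (Ps d p - 1 / n) ^ 2 ≤ ((n : ℝ) - 1) ^ 2 / (n : ℝ) ^ 2 - 2 * ((n : ℝ) - 1) / (n : ℝ) ^ 2 *
      (∑ i, ∑ k, p i * p k * ‖ip (d i) (d k)‖ ^ 2 - ∑ i, p i ^ 2) := by
  set S := ∑ i, ∑ k, √((p i + p k) ^ 2 - 4 * p i * p k * ‖ip (d i) (d k)‖ ^ 2)
  obtain ⟨hlow, hup⟩ := Ps_mem_Icc hd hp hp1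
  have hcs := sq_sum_sqrt_helstrom_le hp hp1 (T := fun i k => ‖ip (d i) (d k)‖ ^ 2)
    (fun _ _ => sq_nonneg _) (fun i k => norm_ip_sq_le_one (hd i) (hd k)) (fun i => by simp [hd])
  rw [Fintype.card_fin] at hcs
  have hn : (0 : ℝ) < n := Nat.cast_pos.mpr (pos_of_sum_eq_one hp1)
  calc (Ps d p - 1 / n) ^ 2 ≤ (S / (2 * n)) ^ 2 := by
        refine pow_le_pow_left₀ (sub_nonneg.mpr hlow) ?_ 2
        rw [sub_le_iff_le_add']
        convert hup using 1
        ring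
    _ = S ^ 2 / (4 * (n : ℝ) ^ 2) := by ring
    _ ≤ _ := by
        rw [div_le_iff₀ (by positivity)]
        refine hcs.trans_eq ?_
        field_simp
        ring

end SuccessProbability

theorem purity_eq_sum_norm_sq {κ : Type*} [Fintype κ] {ρ : Matrix κ κ ℂ} (hρ : ρ.IsHermitian) :
    purity ρ = ∑ i, ∑ j, ‖ρ i j‖ ^ 2 := by
  have h : (ρ * ρ).trace = ((∑ i, ∑ j, ‖ρ i j‖ ^ 2 : ℝ) : ℂ) := by
    push_cast
    refine Finset.sum_congr rfl fun i _ => Finset.sum_congr rfl fun j _ => ?_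
    show ρ i j * ρ j i = _
    rw [← hρ.apply j i, Complex.star_def, Complex.mul_conj']
  rw [purity, h, Complex.ofReal_re]

theorem two_mul_sub_one_div_sq_nonneg (n : ℕ) : 0 ≤ 2 * ((n : ℝ) - 1) / (n : ℝ) ^ 2 := by
  rcases n with _ | n
  · simp
  · rw [Nat.cast_succ, add_sub_cancel_right]; positivity

theorem Vis_sq_le {m n : ℕ} {d : Fin n → Fin m → ℂ} (hd : ∀ i, ip (d i) (d i) = 1)
    {ρ : Matrix (Fin n) (Fin n) ℂ} (hρ : ρ.IsHermitian) :
    Vis d ρ ^ 2 ≤ 2 * ((n : ℝ) - 1) / (n : ℝ) ^ 2 * (purity ρ - ∑ i, ‖ρ i i‖ ^ 2) := by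
  have hc := two_mul_sub_one_div_sq_nonneg n
  have hterm : ∀ i k, 0 ≤ ‖ip (d k) (d i)‖ ^ 2 * ‖ρ i k‖ ^ 2 := fun _ _ => by positivity
  rw [Vis, Real.sq_sqrt (mul_nonneg hc (Finset.sum_nonneg fun i _ => Finset.sum_nonneg
    fun k _ => by split_ifs; exacts [le_rfl, hterm i k])), purity_eq_sum_norm_sq hρ,
    ← sum_sum_ite_eq_sub_sum_diag]
  refine mul_le_mul_of_nonneg_left (Finset.sum_le_sum fun i _ => Finset.sum_le_sum fun k _ => ?_) hc
  split_ifs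
  · exact le_rfl
  · exact mul_le_of_le_one_left (sq_nonneg _) (norm_ip_sq_le_one (hd k) (hd i))

section States

variable {ι κ μ : Type*} {p : ι → ℝ}

theorem norm_ofReal_sqrt_mul_sq (hp : ∀ i, 0 ≤ p i) (i j : ι) :
    ‖(√(p i * p j) : ℂ)‖ ^ 2 = p i * p j := by
  rw [Complex.norm_real, Real.norm_eq_abs, sq_abs, Real.sq_sqrt (mul_nonneg (hp i) (hp j))]

theorem isHermitian_reducedState [Fintype κ] (u : ι → κ → ℂ) :
    (Matrix.of fun i k => (√(p i * p k) : ℂ) * ip (u k) (u i)).IsHermitian :=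
  IsHermitian.ext fun i k => by simp [star_ip, mul_comm (p i)]

theorem sum_norm_sq_reducedState_diag [Fintype ι] [Fintype κ] (hp : ∀ i, 0 ≤ p i)
    {u : ι → κ → ℂ} (hu : ∀ i, ip (u i) (u i) = 1) :
    ∑ i, ‖(Matrix.of fun i k => (√(p i * p k) : ℂ) * ip (u k) (u i)) i i‖ ^ 2 = ∑ i, p i ^ 2 := by
  refine Finset.sum_congr rfl fun i _ => ?_
  rw [of_apply, hu, mul_one, norm_ofReal_sqrt_mul_sq hp, sq]

theorem isHermitian_postState [Fintype μ] (d : ι → μ → ℂ) (u : ι → κ → ℂ) :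
    (Matrix.of fun x y : ι × κ =>
      (√(p x.1 * p y.1) : ℂ) * ip (d y.1) (d x.1) * u x.1 x.2 * star (u y.1 y.2)).IsHermitian :=
  IsHermitian.ext fun x y => by simp [star_ip, mul_comm (p x.1)]; ring

theorem purity_postState [Fintype ι] [Fintype κ] [Fintype μ] (hp : ∀ i, 0 ≤ p i)
    (d : ι → μ → ℂ) {u : ι → κ → ℂ} (hu : ∀ i, ip (u i) (u i) = 1) :
    purity (Matrix.of fun x y : ι × κ =>
      (√(p x.1 * p y.1) : ℂ) * ip (d y.1) (d x.1) * u x.1 x.2 * star (u y.1 y.2)) =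
      ∑ i, ∑ j, p i * p j * ‖ip (d i) (d j)‖ ^ 2 := by
  have hu' := fun i => sum_norm_sq_eq_one (hu i)
  rw [purity_eq_sum_norm_sq (isHermitian_postState d u)]
  simp only [of_apply, norm_mul, norm_star, mul_pow, norm_ofReal_sqrt_mul_sq hp,
    norm_ip_comm (d _) (d _), Fintype.sum_prod_type, ← Finset.mul_sum, hu', mul_one,
    ← Finset.sum_mul]

end States

theorem stmt4_general (n m : ℕ) (d : Fin n → Fin m → ℂ)
    (hd : ∀ i, ip (d i) (d i) = 1)
    (p : Fin n → ℝ) (hp : ∀ i, 0 ≤ p i) (hp1 : ∑ i, p i = 1)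
    (u : Fin n → Fin n → ℂ) (hu : ∀ i, ip (u i) (u i) = 1)
    -- the reduced state of the particle: (ρ_A)_{ik} = √(p_i p_k) ⟨u_k, u_i⟩
    (ρA : Matrix (Fin n) (Fin n) ℂ)
    (hρA : ρA = Matrix.of fun i k => (Real.sqrt (p i * p k) : ℂ) * ip (u k) (u i))
    -- the normalized concurrence squared: E(ψ)² = (2(n−1)/n²)(1 − Tr(ρ_A²))
    (Esq : ℝ) (hE : Esq = (2 * ((n : ℝ) - 1) / (n : ℝ) ^ 2) * (1 - purity ρA))
    -- the post-interaction bipartite state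
    (ρtAB : Matrix (Fin n × Fin n) (Fin n × Fin n) ℂ)
    (hρtAB : ρtAB = Matrix.of fun x y =>
      (Real.sqrt (p x.1 * p y.1) : ℂ) * ip (d y.1) (d x.1) * u x.1 x.2 * star (u y.1 y.2)) :
    (Ps d p - 1 / n) ^ 2 + (Vis d ρA) ^ 2 + Esq ≤
      ((n : ℝ) ^ 2 - 1) / (n : ℝ) ^ 2 -
        (2 * ((n : ℝ) - 1) / (n : ℝ) ^ 2) * purity ρtAB := by
  subst hρA hρtAB hE
  have hPs := sq_Ps_sub_le hd hp hp1
  have hVis := Vis_sq_le hd (isHermitian_reducedState (p := p) u)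
  rw [sum_norm_sq_reducedState_diag hp hu] at hVis
  rw [purity_postState hp d hu]
  linear_combination hPs + hVis

/-- triality among path distinguishability, visibility and entanglement for
a pure bipartite input state `ψ_AB = ∑ i, √(p i) • e_i ⊗ u_i` in the `n`-path
interferometer with detectors and quantum memory. -/
theorem stmt4 (n m : ℕ) (hn : 2 ≤ n) (d : Fin n → Fin m → ℂ)
    (hd : ∀ i, ip (d i) (d i) = 1)
    (p : Fin n → ℝ) (hp : ∀ i, 0 ≤ p i) (hp1 : ∑ i, p i = 1)
    (u : Fin n → Fin n → ℂ) (hu : ∀ i, ip (u i) (u i) = 1)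
    -- the reduced state of the particle: (ρ_A)_{ik} = √(p_i p_k) ⟨u_k, u_i⟩
    (ρA : Matrix (Fin n) (Fin n) ℂ)
    (hρA : ρA = Matrix.of fun i k => (Real.sqrt (p i * p k) : ℂ) * ip (u k) (u i))
    -- the normalized concurrence squared: E(ψ)² = (2(n−1)/n²)(1 − Tr(ρ_A²))
    (Esq : ℝ) (hE : Esq = (2 * ((n : ℝ) - 1) / (n : ℝ) ^ 2) * (1 - purity ρA))
    -- the post-interaction bipartite state
    (ρtAB : Matrix (Fin n × Fin n) (Fin n × Fin n) ℂ)
    (hρtAB : ρtAB = Matrix.of fun x y =>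
      (Real.sqrt (p x.1 * p y.1) : ℂ) * ip (d y.1) (d x.1) * u x.1 x.2 * star (u y.1 y.2)) :
    (Ps d p - 1 / n) ^ 2 + (Vis d ρA) ^ 2 + Esq ≤
      ((n : ℝ) ^ 2 - 1) / (n : ℝ) ^ 2 -
        (2 * ((n : ℝ) - 1) / (n : ℝ) ^ 2) * purity ρtAB :=
  stmt4_general n m d hd p hp hp1 u hu ρA hρA Esq hE ρtAB hρtAB
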